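/- arXiv:0912.2123 — 2 statements merged into one kernel-verified Lean document; each statement's English description precedes it below -/
import Mathlib

section
/- (Kolmogorov's conditional-entropy formula agrees with Sinai's definition) Let (X, μ) be a probability space, T : X → X a measure-preserving map, and f : X → F a measurable map into a finite set F. For n ≥ 1 set a_n = H(ξ_T^{n+1}) − H(ξ_T^n). Then a_n equals the conditional Shannon entropy H[f | (f∘T, f∘T², …, f∘T^n)], the sequence (a_n) is nonincreasing, and a_n converges to h(T, f) = lim_{n→∞} H(ξ_T^n)/n. -/
/-!
Write `ξⁿ` for the itinerary `x ↦ (f x, f (T x), …, f (T^[n-1] x))`. Since `ξⁿ⁺¹` is `ξⁿ ∘ T`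
with the extra coordinate `f` and `T` preserves `μ`, the chain rule `H(g, f) = H(g) + H[f | g]`
gives `a_n = H(ξⁿ⁺¹) - H(ξⁿ ∘ T) = H[f | ξⁿ ∘ T]`. Conditioning on the finer partition
`ξⁿ⁺¹ ∘ T` can only decrease conditional entropy (by concavity of `t ↦ -t log t`, in the form of
the log-sum inequality), so `a_n` is nonincreasing and nonnegative, hence convergent. Since
`H(ξⁿ)` is a telescoping sum of the `a_k`, the averages `H(ξⁿ)/n` have the same limit (Cesàro).
-/

open MeasureTheory Filter Set

/-- Shannon entropy of a finite measurable partition, encoded as a map `f : X → F`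
into a finite set, with respect to the measure `μ` (convention `0 log 0 = 0`). -/
noncomputable def shannonEntropy {X : Type*} [MeasurableSpace X] (μ : Measure X)
    {F : Type*} [Fintype F] (f : X → F) : ℝ :=
  -∑ a : F, (μ (f ⁻¹' {a})).toReal * Real.log (μ (f ⁻¹' {a})).toReal

/-- `H(ξ_T^n)`: the Shannon entropy of the joint partition
`x ↦ (f x, f (T x), …, f (T^[n-1] x))`. -/
noncomputable def jointH {X : Type*} [MeasurableSpace X] (μ : Measure X)
    (T : X → X) {F : Type*} [Fintype F] (f : X → F) (n : ℕ) : ℝ :=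
  shannonEntropy μ (fun x => (fun i : Fin n => f (T^[(i : ℕ)] x)))

/-- Conditional Shannon entropy `H[f | g]` of `f` given `g`: the average over the
cells of `g` of the entropy of `f` with respect to the normalized restriction of `μ`. -/
noncomputable def condShannonEntropy {X : Type*} [MeasurableSpace X] (μ : Measure X)
    {F G : Type*} [Fintype F] [Fintype G] (f : X → F) (g : X → G) : ℝ :=
  ∑ b : G, (μ (g ⁻¹' {b})).toReal *
    shannonEntropy ((μ (g ⁻¹' {b}))⁻¹ • μ.restrict (g ⁻¹' {b})) f

open Topology

namespace Real

lemma mul_negMulLog_div {p q : ℝ} (h : q = 0 → p = 0) :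
    q * negMulLog (p / q) = negMulLog p + p * log q := by
  rcases eq_or_ne q 0 with rfl | hq
  · simp [h rfl]
  rcases eq_or_ne p 0 with rfl | hp
  · simp
  simp only [negMulLog, log_div hp hq]
  field_simp
  ring

-- The log-sum inequality.
lemma sum_mul_negMulLog_div_le {ι : Type*} {t : Finset ι} {p q : ι → ℝ}
    (hp : ∀ i ∈ t, 0 ≤ p i) (hpq : ∀ i ∈ t, p i ≤ q i) :
    ∑ i ∈ t, q i * negMulLog (p i / q i) ≤
      (∑ i ∈ t, q i) * negMulLog ((∑ i ∈ t, p i) / ∑ i ∈ t, q i) := by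
  have hq : ∀ i ∈ t, 0 ≤ q i := fun i hi => (hp i hi).trans (hpq i hi)
  set Q := ∑ i ∈ t, q i
  rcases (Finset.sum_nonneg hq).eq_or_lt with hQ | hQ
  · have hq0 := (Finset.sum_eq_zero_iff_of_nonneg hq).1 hQ.symm
    rw [show Q = 0 from hQ.symm, zero_mul]
    exact (Finset.sum_eq_zero fun i hi => by simp [hq0 i hi]).le
  have hQ0 : Q ≠ 0 := hQ.ne'
  have hmean : ∑ i ∈ t, (q i / Q) • (p i / q i) = (∑ i ∈ t, p i) / Q := by
    rw [Finset.sum_div]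
    refine Finset.sum_congr rfl fun i hi => ?_
    rcases (hq i hi).eq_or_lt with hqi | hqi
    · simp [le_antisymm (hqi ▸ hpq i hi) (hp i hi), ← hqi]
    · rw [smul_eq_mul]; field_simp
  have jensen := concaveOn_negMulLog.le_map_sum (t := t) (w := fun i => q i / Q)
    (p := fun i => p i / q i) (fun i hi => div_nonneg (hq i hi) hQ.le)
    (by rw [← Finset.sum_div, div_self hQ0]) (fun i hi => div_nonneg (hp i hi) (hq i hi))
  calc ∑ i ∈ t, q i * negMulLog (p i / q i)
      = Q * ∑ i ∈ t, (q i / Q) • negMulLog (p i / q i) := by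
        rw [Finset.mul_sum]
        refine Finset.sum_congr rfl fun i _ => ?_
        rw [smul_eq_mul]; field_simp
    _ ≤ Q * negMulLog ((∑ i ∈ t, p i) / Q) := by
        rw [← hmean]; exact mul_le_mul_of_nonneg_left jensen hQ.le

end Real

lemma Filter.Tendsto.div_natCast_of_sub_succ {u : ℕ → ℝ} {h : ℝ}
    (hu : Tendsto (fun n => u (n + 1) - u n) atTop (𝓝 h)) :
    Tendsto (fun n => u n / n) atTop (𝓝 h) := by
  have := hu.cesaro.add (tendsto_const_div_atTop_nhds_zero_nat (u 0))
  rw [add_zero] at this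
  refine this.congr fun n => ?_
  rw [Finset.sum_range_sub]
  ring

lemma MeasureTheory.sum_measureReal_preimage_singleton_inter {X F : Type*} [MeasurableSpace X]
    {μ : Measure X} [IsFiniteMeasure μ] [MeasurableSpace F] [MeasurableSingletonClass F]
    {f : X → F} (hf : Measurable f) (s : Finset F) (A : Set X) :
    ∑ a ∈ s, μ.real (f ⁻¹' {a} ∩ A) = μ.real (f ⁻¹' s ∩ A) := by
  simp only [← measureReal_restrict_apply (hf (measurableSet_singleton _)),
    ← measureReal_restrict_apply (hf s.measurableSet)]
  exact sum_measureReal_preimage_singleton s fun a _ => hf (measurableSet_singleton a)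

open Real ProbabilityTheory

section Entropy

variable {X : Type*} [MeasurableSpace X] {μ : Measure X} {F G H : Type*} [Fintype F] [Fintype G]
  [Fintype H]

lemma shannonEntropy_eq_sum_negMulLog (f : X → F) :
    shannonEntropy μ f = ∑ a, negMulLog (μ.real (f ⁻¹' {a})) := by
  simp only [shannonEntropy, negMulLog, neg_mul, Finset.sum_neg_distrib, measureReal_def]

lemma shannonEntropy_nonneg [IsZeroOrProbabilityMeasure μ] (f : X → F) :
    0 ≤ shannonEntropy μ f := by
  rw [shannonEntropy_eq_sum_negMulLog]
  exact Finset.sum_nonneg fun a _ => negMulLog_nonneg measureReal_nonneg measureReal_le_one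

lemma shannonEntropy_comp_of_injective (f : X → F) {e : F → H} (he : Function.Injective e) :
    shannonEntropy μ (e ∘ f) = shannonEntropy μ f := by
  simp only [shannonEntropy_eq_sum_negMulLog]
  refine (Fintype.sum_of_injective e he _ _ (fun b hb => ?_) fun a => ?_).symm
  · rw [preimage_comp, preimage_singleton_eq_empty.2 hb, preimage_empty, measureReal_empty,
      negMulLog_zero]
  · rw [preimage_comp, ← image_singleton, he.preimage_image]

lemma shannonEntropy_comp_of_measurePreserving {Y : Type*} [MeasurableSpace Y] {ν : Measure Y}
    {T : X → Y} (hT : MeasurePreserving T μ ν) [MeasurableSpace F] [MeasurableSingletonClass F]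
    {f : Y → F} (hf : Measurable f) :
    shannonEntropy μ (f ∘ T) = shannonEntropy ν f := by
  simp only [shannonEntropy_eq_sum_negMulLog, preimage_comp, measureReal_def,
    hT.measure_preimage (hf (measurableSet_singleton _)).nullMeasurableSet]

lemma condShannonEntropy_eq_sum_cond (f : X → F) (g : X → G) :
    condShannonEntropy μ f g = ∑ b, μ.real (g ⁻¹' {b}) * shannonEntropy μ[|g ⁻¹' {b}] f :=
  rfl

lemma condShannonEntropy_nonneg (f : X → F) (g : X → G) :
    0 ≤ condShannonEntropy μ f g := by
  rw [condShannonEntropy_eq_sum_cond]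
  exact Finset.sum_nonneg fun b _ => mul_nonneg measureReal_nonneg (shannonEntropy_nonneg f)

variable [MeasurableSpace F] [MeasurableSingletonClass F]

lemma condShannonEntropy_eq_sum {f : X → F} (hf : Measurable f) (g : X → G) :
    condShannonEntropy μ f g = ∑ b, ∑ a, μ.real (g ⁻¹' {b}) *
      negMulLog (μ.real (g ⁻¹' {b} ∩ f ⁻¹' {a}) / μ.real (g ⁻¹' {b})) := by
  simp only [condShannonEntropy_eq_sum_cond, shannonEntropy_eq_sum_negMulLog, Finset.mul_sum,
    measureReal_def, cond_apply' (hf (measurableSet_singleton _)), ENNReal.toReal_mul,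
    ENNReal.toReal_inv, inv_mul_eq_div]

lemma shannonEntropy_pair_eq_add_condShannonEntropy [IsFiniteMeasure μ] {f : X → F}
    (hf : Measurable f) (g : X → G) :
    shannonEntropy μ (fun x => (g x, f x)) = shannonEntropy μ g + condShannonEntropy μ f g := by
  rw [condShannonEntropy_eq_sum hf, shannonEntropy_eq_sum_negMulLog,
    shannonEntropy_eq_sum_negMulLog, Fintype.sum_prod_type, ← Finset.sum_add_distrib]
  refine Finset.sum_congr rfl fun b _ => ?_
  have hmass : ∑ a, μ.real (g ⁻¹' {b} ∩ f ⁻¹' {a}) = μ.real (g ⁻¹' {b}) := by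
    simpa [inter_comm] using sum_measureReal_preimage_singleton_inter (μ := μ) hf .univ (g ⁻¹' {b})
  have hcell : ∀ a, μ.real (g ⁻¹' {b} ∩ f ⁻¹' {a}) ≤ μ.real (g ⁻¹' {b}) :=
    fun a => measureReal_mono inter_subset_left
  rw [Finset.sum_congr rfl fun a _ => mul_negMulLog_div fun h =>
    le_antisymm (h ▸ hcell a) measureReal_nonneg]
  rw [Finset.sum_add_distrib, ← Finset.sum_mul, hmass, negMulLog]
  simp only [← singleton_prod_singleton, mk_preimage_prod]
  ring

lemma condShannonEntropy_le_comp [IsFiniteMeasure μ] [MeasurableSpace G]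
    [MeasurableSingletonClass G] {f : X → F} (hf : Measurable f) {g : X → G} (hg : Measurable g)
    (φ : G → H) :
    condShannonEntropy μ f g ≤ condShannonEntropy μ f (φ ∘ g) := by
  classical
  have hfiber : ∀ c A, μ.real ((φ ∘ g) ⁻¹' {c} ∩ A) =
      ∑ b ∈ {b | φ b = c}, μ.real (g ⁻¹' {b} ∩ A) := fun c A => by
    rw [sum_measureReal_preimage_singleton_inter hg, Finset.coe_filter]
    simp only [Finset.mem_univ, true_and]
    rfl
  have hmass : ∀ c, μ.real ((φ ∘ g) ⁻¹' {c}) = ∑ b ∈ {b | φ b = c}, μ.real (g ⁻¹' {b}) :=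
    fun c => by simpa using hfiber c univ
  rw [condShannonEntropy_eq_sum hf, condShannonEntropy_eq_sum hf,
    ← Finset.sum_fiberwise Finset.univ φ]
  refine Finset.sum_le_sum fun c _ => ?_
  rw [Finset.sum_comm]
  refine Finset.sum_le_sum fun a _ => ?_
  rw [hmass, hfiber]
  exact sum_mul_negMulLog_div_le (fun b _ => measureReal_nonneg)
    fun b _ => measureReal_mono inter_subset_left

end Entropy

section Itinerary

variable {X : Type*} {T : X → X} {F : Type*} {f : X → F}

def itinerary (T : X → X) (f : X → F) (n : ℕ) (x : X) : Fin n → F :=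
  fun i => f (T^[i] x)

lemma measurable_itinerary [MeasurableSpace X] [MeasurableSpace F] (hT : Measurable T)
    (hf : Measurable f) (n : ℕ) :
    Measurable (itinerary T f n) :=
  measurable_pi_lambda _ fun i => hf.comp (hT.iterate i)

lemma itinerary_succ (n : ℕ) (x : X) :
    itinerary T f (n + 1) x = Fin.cons (f x) (itinerary T f n (T x)) := by
  ext i
  exact Fin.cases rfl (fun _ => rfl) i

variable [MeasurableSpace X] {μ : Measure X} [Fintype F]

lemma jointH_eq_shannonEntropy_itinerary (n : ℕ) :
    jointH μ T f n = shannonEntropy μ (itinerary T f n) :=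
  rfl

lemma jointH_eq_shannonEntropy_itinerary_comp [MeasurableSpace F] [MeasurableSingletonClass F]
    (hT : MeasurePreserving T μ μ) (hf : Measurable f) (n : ℕ) :
    jointH μ T f n = shannonEntropy μ (itinerary T f n ∘ T) := by
  rw [jointH_eq_shannonEntropy_itinerary,
    shannonEntropy_comp_of_measurePreserving hT (measurable_itinerary hT.measurable hf n)]

lemma jointH_succ_eq_shannonEntropy_pair (n : ℕ) :
    jointH μ T f (n + 1) = shannonEntropy μ (fun x => ((itinerary T f n ∘ T) x, f x)) := by
  have hcons : Function.Injective fun p : (Fin n → F) × F => (Fin.cons p.2 p.1 : Fin (n + 1) → F) :=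
    fun p q h => by obtain ⟨h₂, h₁⟩ := Fin.cons_inj.1 h; exact Prod.ext h₁ h₂
  rw [jointH_eq_shannonEntropy_itinerary, ← shannonEntropy_comp_of_injective _ hcons]
  exact congrArg _ (funext (itinerary_succ n))

variable [MeasurableSpace F] [MeasurableSingletonClass F] [IsFiniteMeasure μ]

lemma jointH_succ_sub_jointH (hT : MeasurePreserving T μ μ) (hf : Measurable f) (n : ℕ) :
    jointH μ T f (n + 1) - jointH μ T f n = condShannonEntropy μ f (itinerary T f n ∘ T) := by
  rw [jointH_succ_eq_shannonEntropy_pair, jointH_eq_shannonEntropy_itinerary_comp hT hf,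
    shannonEntropy_pair_eq_add_condShannonEntropy hf]
  ring

lemma antitone_condShannonEntropy_itinerary_comp (hT : Measurable T) (hf : Measurable f) :
    Antitone fun n => condShannonEntropy μ f (itinerary T f n ∘ T) :=
  -- `Fin.init ∘ itinerary T f (n + 1) = itinerary T f n` holds definitionally.
  antitone_nat_of_succ_le fun n =>
    condShannonEntropy_le_comp hf ((measurable_itinerary hT hf (n + 1)).comp hT) Fin.init

end Itinerary

/-- Kolmogorov's conditional-entropy formula agrees with Sinai's
definition: for `n ≥ 1`, `a_n = H(ξ_T^{n+1}) − H(ξ_T^n)` equals the conditional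
entropy `H[f | (f∘T, …, f∘T^n)]`, the sequence `(a_n)` is nonincreasing, and `a_n`
converges to `h(T,f) = lim_n H(ξ_T^n)/n`. -/
theorem kolmogorov_conditional_entropy {X : Type*} [MeasurableSpace X] (μ : Measure X)
    [IsProbabilityMeasure μ] (T : X → X) (hT : MeasurePreserving T μ μ)
    {F : Type*} [Fintype F] [MeasurableSpace F] [MeasurableSingletonClass F]
    (f : X → F) (hf : Measurable f) :
    ∃ h : ℝ, Tendsto (fun n : ℕ => jointH μ T f n / (n : ℝ)) atTop (nhds h) ∧
      (∀ n : ℕ, 1 ≤ n →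
        jointH μ T f (n + 1) - jointH μ T f n =
          condShannonEntropy μ f (fun x => (fun i : Fin n => f (T^[(i : ℕ) + 1] x)))) ∧
      (∀ n : ℕ, 1 ≤ n →
        jointH μ T f (n + 2) - jointH μ T f (n + 1) ≤
          jointH μ T f (n + 1) - jointH μ T f n) ∧
      Tendsto (fun n : ℕ => jointH μ T f (n + 1) - jointH μ T f n) atTop (nhds h) := by
  have hstep := jointH_succ_sub_jointH hT hf
  have hanti : Antitone fun n => jointH μ T f (n + 1) - jointH μ T f n := by
    simpa only [hstep] using antitone_condShannonEntropy_itinerary_comp (μ := μ) hT.measurable hf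
  have hbdd : BddBelow (range fun n => jointH μ T f (n + 1) - jointH μ T f n) :=
    ⟨0, forall_mem_range.2 fun n => (hstep n).ge.trans' (condShannonEntropy_nonneg f _)⟩
  have hlim := tendsto_atTop_ciInf hanti hbdd
  exact ⟨_, hlim.div_natCast_of_sub_succ, fun n _ => hstep n, fun n _ => hanti n.le_succ, hlim⟩
end

section
/- (Rokhlin's countable generator theorem) Let (X, μ) be a nonatomic standard Borel probability space and T : X → X an invertible, aperiodic, measure-preserving transformation (aperiodic meaning μ{x : T^n x = x} = 0 for every n ≥ 1). Then there exists a measurable map f : X → ℕ which is a two-sided generator: for every measurable set A ⊆ X there exists a set B in the σ-algebra generated by the maps {f ∘ T^n : n ∈ ℤ} with μ(A Δ B) = 0. -/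
open MeasureTheory Filter Set

/-!
Choose sets `F m` whose first `2 ^ m` iterates are pairwise disjoint and whose orbits cover almost
every point: by aperiodicity, countably many such sets cut out by a separating sequence cover
almost everything, and they can be glued orbit by orbit. Then `μ (F m) ≤ 2⁻¹ ^ m`, so by
Borel–Cantelli almost every point lies in only finitely many `F m`. The code `f x` lists, for each
`m` with `x ∈ F m`, which of the generating sets `D 0, …, D m` contain each point `T^l x` of the
excursion of `x` before it returns to `F m`. By Poincaré recurrence almost every `x` lies on such
an excursion, starting at some `T^(-j) x ∈ F m`, so membership of `x` in `D m` can be read off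
`f (T^(-j) x)`. Hence every `D m`, and then every measurable set, agrees a.e. with a set in the
σ-algebra generated by the maps `f ∘ T^n`.
-/

/-- The `n`-th power `T^n` (for `n : ℤ`) of an invertible transformation given as a
measurable equivalence `e : X ≃ᵐ X`. -/
def zIter {X : Type*} [MeasurableSpace X] (e : X ≃ᵐ X) (n : ℤ) : X → X :=
  if 0 ≤ n then (⇑e)^[n.toNat] else (⇑e.symm)^[(-n).toNat]

section ZIter

variable {X : Type*} [MeasurableSpace X] (e : X ≃ᵐ X)

theorem zIter_eq_coe_zpow (n : ℤ) : zIter e n = ⇑(e.toEquiv ^ n) := by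
  unfold zIter
  rcases Int.eq_nat_or_neg n with ⟨k, rfl | rfl⟩
  · simp [Equiv.Perm.coe_pow]
  · rcases Nat.eq_zero_or_pos k with rfl | hk
    · simp
    · rw [if_neg (by omega), zpow_neg, zpow_natCast, ← inv_pow, Equiv.Perm.coe_pow]
      simp

theorem zIter_natCast (n : ℕ) : zIter e n = (⇑e)^[n] := by
  simp [zIter]

@[simp]
theorem zIter_zero : zIter e 0 = id := by
  simp [zIter]

theorem zIter_neg_natCast (n : ℕ) : zIter e (-n) = (⇑e.symm)^[n] := by
  rw [zIter_eq_coe_zpow, zpow_neg, zpow_natCast, ← inv_pow, Equiv.Perm.coe_pow]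
  rfl

theorem zIter_add_apply (m n : ℤ) (x : X) : zIter e (m + n) x = zIter e m (zIter e n x) := by
  simp only [zIter_eq_coe_zpow, zpow_add, Equiv.Perm.mul_apply]

theorem iterate_zIter (i : ℕ) (n : ℤ) (x : X) : (⇑e)^[i] (zIter e n x) = zIter e (i + n) x := by
  rw [zIter_add_apply, zIter_natCast]

theorem iterate_zIter_neg (j : ℕ) (x : X) : (⇑e)^[j] (zIter e (-j) x) = x := by
  rw [iterate_zIter, add_neg_cancel, zIter_zero, id]

theorem measurable_zIter (n : ℤ) : Measurable (zIter e n) := by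
  unfold zIter
  split_ifs
  exacts [e.measurable.iterate _, e.symm.measurable.iterate _]

theorem MeasureTheory.MeasurePreserving.zIter {μ : Measure X} (hT : MeasurePreserving e μ μ)
    (n : ℤ) : MeasurePreserving (zIter e n) μ μ := by
  unfold _root_.zIter
  split_ifs
  exacts [hT.iterate _, (hT.symm e).iterate _]

theorem ae_forall_zIter {μ : Measure X} (hT : MeasurePreserving e μ μ) {p : X → Prop}
    (h : ∀ᵐ x ∂μ, p x) : ∀ᵐ x ∂μ, ∀ n : ℤ, p (zIter e n x) :=
  ae_all_iff.2 fun n => (hT.zIter e n).quasiMeasurePreserving.ae h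

end ZIter

namespace Rokhlin

open Encodable

theorem exists_symmDiff_null_of_generateFrom {α : Type*} {m m0 : MeasurableSpace α}
    {μ : Measure α} {S : Set (Set α)} (hS : MeasurableSpace.generateFrom S = m0)
    (h : ∀ s ∈ S, ∃ t, MeasurableSet[m] t ∧ s =ᵐ[μ] t) {A : Set α} (hA : MeasurableSet A) :
    ∃ B, MeasurableSet[m] B ∧ μ (symmDiff A B) = 0 := by
  have hle : m0 ≤ eventuallyMeasurableSpace m (ae μ) :=
    hS.symm.trans_le (MeasurableSpace.generateFrom_le h)
  obtain ⟨B, hB, hAB⟩ := hle A hA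
  exact ⟨B, hB, measure_symmDiff_eq_zero_iff.2 hAB⟩

theorem measurableSet_iSup_comap_encode {α ι β : Type*} [Encodable β] (g : ι → α → β) (i : ι)
    (A : Set β) :
    MeasurableSet[⨆ i, MeasurableSpace.comap (fun x => encode (g i x)) ⊤] {x | g i x ∈ A} :=
  le_iSup (fun i => MeasurableSpace.comap (fun x => encode (g i x)) ⊤) i _
    ⟨encode '' A, trivial, by ext; simp [encode_injective.mem_set_image]⟩

section Combinatorics

variable {X : Type*}

def IsTowerBase (T : X → X) (n : ℕ) (B : Set X) : Prop :=
  ∀ x ∈ B, ∀ i ∈ Ioo 0 n, T^[i] x ∉ B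

/-- This is `0` when `x` never returns to `B`. -/
noncomputable def returnTime (T : X → X) (B : Set X) (x : X) : ℕ := sInf {l | 0 < l ∧ T^[l] x ∈ B}

theorem lt_returnTime_iff {T : X → X} {B : Set X} {x : X} {j : ℕ} :
    j < returnTime T B x ↔ (∃ l, 0 < l ∧ T^[l] x ∈ B) ∧ ∀ i ∈ Ioc 0 j, T^[i] x ∉ B := by
  constructor
  · intro hj
    refine ⟨?_, fun i hi hiB => Nat.notMem_of_lt_sInf (hi.2.trans_lt hj) ⟨hi.1, hiB⟩⟩
    by_contra! hnone
    have hempty : {l | 0 < l ∧ T^[l] x ∈ B} = ∅ :=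
      Set.eq_empty_of_forall_notMem fun l hl => hnone l hl.1 hl.2
    simp [returnTime, hempty] at hj
  · rintro ⟨hne, hfirst⟩
    have hmem := Nat.sInf_mem hne
    by_contra! hle
    exact hfirst _ ⟨hmem.1, hle⟩ hmem.2

open Classical in
noncomputable def pattern (D : ℕ → Set X) (m : ℕ) (x : X) : Finset ℕ :=
  {k ∈ Finset.range (m + 1) | x ∈ D k}

noncomputable def excursion (T : X → X) (D : ℕ → Set X) (B : Set X) (m : ℕ) (x : X) :
    Finset (ℕ × Finset ℕ) :=
  (Finset.range (returnTime T B x)).image fun l => (l, pattern D m (T^[l] x))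

open Classical in
/-- This is `∅` when `x` lies in infinitely many `F m`, which happens only on a null set. -/
noncomputable def label (T : X → X) (D F : ℕ → Set X) (x : X) :
    Finset (ℕ × Finset (ℕ × Finset ℕ)) :=
  if h : {m | x ∈ F m}.Finite then h.toFinset.image fun m => (m, excursion T D (F m) m x) else ∅

theorem mem_pattern {D : ℕ → Set X} {m k : ℕ} {x : X} : k ∈ pattern D m x ↔ k ≤ m ∧ x ∈ D k := by
  simp [pattern]

theorem mem_excursion {T : X → X} {D : ℕ → Set X} {B : Set X} {m : ℕ} {x : X}
    {l : ℕ} {P : Finset ℕ} :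
    (l, P) ∈ excursion T D B m x ↔ l < returnTime T B x ∧ pattern D m (T^[l] x) = P := by
  simp [excursion, eq_comm]

theorem mem_label {T : X → X} {D F : ℕ → Set X} {x : X} {m : ℕ} {G : Finset (ℕ × Finset ℕ)} :
    (m, G) ∈ label T D F x ↔ {m | x ∈ F m}.Finite ∧ x ∈ F m ∧ excursion T D (F m) m x = G := by
  classical
  unfold label
  split_ifs with h
  · simp [h, eq_comm]
  · simp [h]

end Combinatorics

variable {X : Type*} [MeasurableSpace X]

theorem IsTowerBase.mul_measure_le {T : X → X} {μ : Measure X} (hT : MeasurePreserving T μ μ)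
    {n : ℕ} {B : Set X} (hB : IsTowerBase T n B) (hBm : NullMeasurableSet B μ) :
    n * μ B ≤ μ univ := by
  by_contra! hlt
  obtain ⟨x, hx, i, hi, hix⟩ := hT.exists_mem_iterate_mem_of_measure_univ_lt_mul_measure hBm hlt
  exact hB x hx i hi hix

theorem exists_isTowerBase_cover [MeasurableSpace.CountablySeparated X] {T : X → X}
    (hT : Measurable T) (n : ℕ) :
    ∃ C : ℕ → Set X, (∀ t, MeasurableSet (C t)) ∧ (∀ t, IsTowerBase T n (C t)) ∧
      ∀ x, (∀ i ∈ Ioo 0 n, T^[i] x ≠ x) → ∃ t, x ∈ C t := by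
  obtain ⟨φ, hφ, hφinj⟩ := MeasurableSpace.measurable_injection_nat_bool_of_countablySeparated X
  obtain ⟨g, hg⟩ := exists_surjective_nat (Fin n → ℕ × Bool)
  -- `x ∈ C t` prescribes, for each `0 < i < n`, a coordinate where `φ x` and `φ (T^[i] x)` differ
  refine ⟨fun t => {x | ∀ i : Fin n, 0 < (i : ℕ) →
    φ x (g t i).1 = (g t i).2 ∧ φ (T^[i] x) (g t i).1 ≠ (g t i).2}, fun t => ?_, ?_, ?_⟩
  · have hφi : ∀ j, Measurable fun x => φ x j := fun j => (measurable_pi_apply j).comp hφ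
    refine measurableSet_setOfPred.2 (Measurable.forall fun i => Measurable.imp measurable_const ?_)
    exact (measurableSet_setOfPred.1 (hφi _ (measurableSet_singleton _))).and
      (measurableSet_setOfPred.1 ((hφi _).comp (hT.iterate _) (measurableSet_singleton _)).compl)
  · intro t x hx i hi hix
    exact (hx ⟨i, hi.2⟩ hi.1).2 (hix ⟨i, hi.2⟩ hi.1).1
  · intro x hx
    have hsep : ∀ i : Fin n, ∃ p : ℕ × Bool,
        0 < (i : ℕ) → φ x p.1 = p.2 ∧ φ (T^[i] x) p.1 ≠ p.2 := by
      intro i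
      by_cases hi : 0 < (i : ℕ)
      · obtain ⟨j, hj⟩ := Function.ne_iff.1 (hφinj.ne (hx i ⟨hi, i.2⟩).symm)
        exact ⟨(j, φ x j), fun _ => ⟨rfl, Ne.symm hj⟩⟩
      · exact ⟨(0, true), fun h => absurd h hi⟩
    choose v hv using hsep
    obtain ⟨t, rfl⟩ := hg v
    exact ⟨t, hv⟩

def zOrbit (e : X ≃ᵐ X) (B : Set X) : Set X := ⋃ k : ℤ, zIter e k ⁻¹' B

variable (e : X ≃ᵐ X)

theorem mem_zOrbit {B : Set X} {x : X} : x ∈ zOrbit e B ↔ ∃ k : ℤ, zIter e k x ∈ B :=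
  mem_iUnion

theorem measurableSet_zOrbit {B : Set X} (hB : MeasurableSet B) : MeasurableSet (zOrbit e B) :=
  MeasurableSet.iUnion fun k => measurable_zIter e k hB

theorem subset_zOrbit (B : Set X) : B ⊆ zOrbit e B :=
  fun _ hx => (mem_zOrbit e).2 ⟨0, hx⟩

theorem zIter_mem_zOrbit_iff {B : Set X} (n : ℤ) {x : X} :
    zIter e n x ∈ zOrbit e B ↔ x ∈ zOrbit e B := by
  simp only [mem_zOrbit, ← zIter_add_apply]
  exact ⟨fun ⟨k, hk⟩ => ⟨k + n, hk⟩, fun ⟨k, hk⟩ => ⟨k - n, by rwa [sub_add_cancel]⟩⟩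

theorem iterate_mem_zOrbit_iff {B : Set X} (i : ℕ) {x : X} :
    (⇑e)^[i] x ∈ zOrbit e B ↔ x ∈ zOrbit e B := by
  rw [← zIter_natCast, zIter_mem_zOrbit_iff]

/-- Keeping from `C t` only the orbits that miss every earlier `C s` glues tower bases into one. -/
theorem exists_isTowerBase_iUnion_subset_zOrbit {n : ℕ} {C : ℕ → Set X}
    (hCm : ∀ t, MeasurableSet (C t)) (hC : ∀ t, IsTowerBase (⇑e) n (C t)) :
    ∃ B, MeasurableSet B ∧ IsTowerBase (⇑e) n B ∧ ⋃ t, C t ⊆ zOrbit e B := by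
  refine ⟨⋃ t, C t \ ⋃ s < t, zOrbit e (C s), ?_, ?_, ?_⟩
  · exact .iUnion fun t => (hCm t).diff <| .biUnion (to_countable _) fun s _ =>
      measurableSet_zOrbit e (hCm s)
  · rintro x hx i hi hix
    simp only [mem_iUnion, Set.mem_sdiff, not_exists] at hx hix
    obtain ⟨t, hxt, hxt'⟩ := hx
    obtain ⟨s, his, his'⟩ := hix
    rcases lt_trichotomy t s with hts | rfl | hst
    · exact his' t hts ((iterate_mem_zOrbit_iff e i).2 (subset_zOrbit e _ hxt))
    · exact hC t x hxt i hi his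
    · exact hxt' s hst ((iterate_mem_zOrbit_iff e i).1 (subset_zOrbit e _ his))
  · intro x hx
    classical
    have hex : ∃ s, x ∈ zOrbit e (C s) := (mem_iUnion.1 hx).imp fun t => (subset_zOrbit e _ ·)
    obtain ⟨k, hk⟩ := (mem_zOrbit e).1 (Nat.find_spec hex)
    refine (mem_zOrbit e).2 ⟨k, mem_iUnion.2 ⟨Nat.find hex, hk, ?_⟩⟩
    simp only [mem_iUnion, not_exists]
    exact fun s hs hks => Nat.find_min hex hs ((zIter_mem_zOrbit_iff e k).1 hks)

theorem exists_isTowerBase_ae_mem_zOrbit [MeasurableSpace.CountablySeparated X] {μ : Measure X}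
    (hfree : ∀ᵐ x ∂μ, ∀ i, 0 < i → (⇑e)^[i] x ≠ x) (n : ℕ) :
    ∃ B, MeasurableSet B ∧ IsTowerBase (⇑e) n B ∧ ∀ᵐ x ∂μ, x ∈ zOrbit e B := by
  obtain ⟨C, hCm, hCbase, hCcover⟩ := exists_isTowerBase_cover e.measurable n
  obtain ⟨B, hBm, hBbase, hCB⟩ := exists_isTowerBase_iUnion_subset_zOrbit e hCm hCbase
  refine ⟨B, hBm, hBbase, hfree.mono fun x hx => hCB ?_⟩
  exact mem_iUnion.2 (hCcover x fun i hi => hx i hi.1)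

theorem ae_exists_lt_returnTime {μ : Measure X} [IsFiniteMeasure μ]
    (hT : MeasurePreserving e μ μ) {B : Set X} (hB : MeasurableSet B)
    (hB_orbit : ∀ᵐ x ∂μ, x ∈ zOrbit e B) :
    ∀ᵐ x ∂μ, ∃ j : ℕ, zIter e (-j) x ∈ B ∧ j < returnTime e B (zIter e (-j) x) := by
  have hrec := hT.conservative.ae_mem_imp_frequently_image_mem hB.nullMeasurableSet
  have hrec_symm := (hT.symm e).conservative.ae_mem_imp_frequently_image_mem hB.nullMeasurableSet
  filter_upwards [hB_orbit, ae_forall_zIter e hT hrec, ae_forall_zIter e hT hrec_symm]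
    with x hx hfwd hbwd
  classical
  have hback : ∃ j : ℕ, zIter e (-j) x ∈ B := by
    obtain ⟨k, hk⟩ := (mem_zOrbit e).1 hx
    obtain ⟨l, hkl, hl⟩ := frequently_atTop.1 (hbwd k hk) k.toNat
    refine ⟨(l - k).toNat, ?_⟩
    rwa [← zIter_neg_natCast, ← zIter_add_apply, show -(l : ℤ) + k = -((l - k).toNat : ℤ) by
      omega] at hl
  refine ⟨Nat.find hback, Nat.find_spec hback, lt_returnTime_iff.2 ⟨?_, ?_⟩⟩
  · obtain ⟨l, hl, hlB⟩ := frequently_atTop.1 (hfwd _ (Nat.find_spec hback)) 1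
    exact ⟨l, hl, hlB⟩
  · intro i hi
    rw [iterate_zIter, show (i : ℤ) + -(Nat.find hback : ℕ) = -((Nat.find hback - i : ℕ) : ℤ) by
      have := hi.2; push_cast [this]; ring]
    exact Nat.find_min hback (Nat.sub_lt (hi.1.trans_le hi.2) hi.1)

theorem ae_finite_setOf_mem_of_isTowerBase {μ : Measure X} [IsProbabilityMeasure μ] {T : X → X}
    (hT : MeasurePreserving T μ μ) {F : ℕ → Set X} (hFm : ∀ m, MeasurableSet (F m))
    (hF : ∀ m, IsTowerBase T (2 ^ m) (F m)) : ∀ᵐ x ∂μ, {m | x ∈ F m}.Finite := by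
  have hle : ∀ m, μ (F m) ≤ 2⁻¹ ^ m := fun m => by
    have := (hF m).mul_measure_le hT (hFm m).nullMeasurableSet
    rw [measure_univ, mul_comm] at this
    rw [← ENNReal.inv_pow, ENNReal.le_inv_iff_mul_le]
    exact_mod_cast this
  have hsum : ∑' m, μ (F m) ≠ ⊤ := ne_top_of_le_ne_top
    (by rw [ENNReal.tsum_geometric_two]; exact ENNReal.ofNat_ne_top) (ENNReal.tsum_le_tsum hle)
  filter_upwards [ae_eventually_notMem hsum] with x hx
  rw [← Nat.cofinite_eq_atTop, eventually_cofinite] at hx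
  simpa using hx

section Measurability

variable {T : X → X} {D F : ℕ → Set X}

theorem measurable_pattern (hD : ∀ k, MeasurableSet (D k)) (m : ℕ) : Measurable (pattern D m) := by
  simp only [measurable_finset_iff, mem_pattern]
  fun_prop (disch := exact hD _)

theorem measurableSet_lt_returnTime (hT : Measurable T) {B : Set X} (hB : MeasurableSet B) (j : ℕ) :
    MeasurableSet {x | j < returnTime T B x} := by
  simp only [lt_returnTime_iff]
  exact measurableSet_setOfPred.2 (by fun_prop (disch := exact hB))

theorem measurable_excursion (hT : Measurable T) (hD : ∀ k, MeasurableSet (D k)) {B : Set X}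
    (hB : MeasurableSet B) (m : ℕ) : Measurable (excursion T D B m) := by
  refine measurable_finset_iff.2 fun ⟨l, P⟩ => ?_
  simp only [mem_excursion]
  refine (measurableSet_setOfPred.1 (measurableSet_lt_returnTime hT hB l)).and ?_
  exact measurableSet_setOfPred.1
    ((measurable_pattern hD m).comp (hT.iterate l) (measurableSet_singleton P))

theorem measurable_label (hT : Measurable T) (hD : ∀ k, MeasurableSet (D k))
    (hF : ∀ m, MeasurableSet (F m)) : Measurable (label T D F) := by
  refine measurable_finset_iff.2 fun ⟨m, G⟩ => ?_
  simp only [mem_label, Set.finite_iff_bddAbove, bddAbove_def]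
  refine .and (by fun_prop (disch := exact hF _)) ((measurableSet_setOfPred.1 (hF m)).and ?_)
  exact measurableSet_setOfPred.1
    (measurable_excursion hT hD (hF m) m (measurableSet_singleton G))

end Measurability

def decodeSet (e : X ≃ᵐ X) (D F : ℕ → Set X) (k : ℕ) : Set X :=
  ⋃ j : ℕ, {x | ∃ G P, (k, G) ∈ label e D F (zIter e (-j) x) ∧ (j, P) ∈ G ∧ k ∈ P}

theorem decodeSet_subset {D F : ℕ → Set X} (k : ℕ) : decodeSet e D F k ⊆ D k := by
  intro x hx
  obtain ⟨j, G, P, hG, hP, hk⟩ := mem_iUnion.1 hx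
  obtain ⟨-, -, rfl⟩ := mem_label.1 hG
  obtain ⟨-, rfl⟩ := mem_excursion.1 hP
  rw [iterate_zIter_neg] at hk
  exact (mem_pattern.1 hk).2

theorem ae_mem_decodeSet {μ : Measure X} [IsFiniteMeasure μ] (hT : MeasurePreserving e μ μ)
    {D F : ℕ → Set X} {k : ℕ} (hFk : MeasurableSet (F k))
    (hfin : ∀ᵐ x ∂μ, {m | x ∈ F m}.Finite) (hFk_orbit : ∀ᵐ x ∂μ, x ∈ zOrbit e (F k)) :
    D k ≤ᵐ[μ] decodeSet e D F k := by
  filter_upwards [ae_exists_lt_returnTime e hT hFk hFk_orbit, ae_forall_zIter e hT hfin]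
    with x ⟨j, hjF, hjr⟩ hfin (hxD : x ∈ D k)
  refine mem_iUnion.2 ⟨j, _, _, mem_label.2 ⟨hfin _, hjF, rfl⟩, mem_excursion.2 ⟨hjr, rfl⟩, ?_⟩
  rw [iterate_zIter_neg]
  exact mem_pattern.2 ⟨le_rfl, hxD⟩

theorem measurableSet_decodeSet (D F : ℕ → Set X) (k : ℕ) :
    MeasurableSet[⨆ n : ℤ, MeasurableSpace.comap
      (fun x => encode (label e D F (zIter e n x))) ⊤] (decodeSet e D F k) :=
  .iUnion fun j => measurableSet_iSup_comap_encode (fun n x => label e D F (zIter e n x)) (-j)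
    {s | ∃ G P, (k, G) ∈ s ∧ (j, P) ∈ G ∧ k ∈ P}

end Rokhlin

open Rokhlin Encodable in
theorem rokhlin_countable_generator_general {X : Type*} [MeasurableSpace X] [StandardBorelSpace X]
    (μ : Measure X) [IsProbabilityMeasure μ]
    (e : X ≃ᵐ X) (hT : MeasurePreserving (⇑e) μ μ)
    (hap : ∀ n : ℕ, 1 ≤ n → μ {x : X | (⇑e)^[n] x = x} = 0) :
    ∃ f : X → ℕ, Measurable f ∧
      ∀ A : Set X, MeasurableSet A →
        ∃ B : Set X,
          MeasurableSet[⨆ n : ℤ,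
            MeasurableSpace.comap (fun x => f (zIter e n x)) (⊤ : MeasurableSpace ℕ)] B ∧
          μ (symmDiff A B) = 0 := by
  set D := MeasurableSpace.natGeneratingSequence X
  have hD : ∀ k, MeasurableSet (D k) := MeasurableSpace.measurableSet_natGeneratingSequence
  have hfree : ∀ᵐ x ∂μ, ∀ i, 0 < i → (⇑e)^[i] x ≠ x := ae_all_iff.2 fun i => by
    rcases Nat.eq_zero_or_pos i with rfl | hi
    · exact .of_forall fun _ h => absurd h (lt_irrefl 0)
    · exact (measure_eq_zero_iff_ae_notMem.1 (hap i hi)).mono fun _ hx _ => hx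
  choose F hFm hFbase hForb using fun m => exists_isTowerBase_ae_mem_zOrbit e hfree (2 ^ m)
  have hfin := ae_finite_setOf_mem_of_isTowerBase hT hFm hFbase
  refine ⟨fun x => encode (label e D F x),
    (measurable_of_countable encode).comp (measurable_label e.measurable hD hFm), fun A hA => ?_⟩
  refine exists_symmDiff_null_of_generateFrom
    (MeasurableSpace.generateFrom_natGeneratingSequence X) ?_ hA
  refine forall_mem_range.2 fun k => ⟨_, measurableSet_decodeSet e D F k, ?_⟩
  exact (ae_mem_decodeSet e hT (hFm k) hfin (hForb k)).antisymm
    (decodeSet_subset e k).eventuallyLE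

/-- Rokhlin's countable generator theorem: an invertible aperiodic
measure-preserving transformation of a nonatomic standard Borel probability space
has a countable two-sided generator `f : X → ℕ`: every measurable set agrees mod 0
with a set in the σ-algebra generated by the maps `f ∘ T^n`, `n ∈ ℤ`. -/
theorem rokhlin_countable_generator {X : Type*} [MeasurableSpace X] [StandardBorelSpace X]
    (μ : Measure X) [IsProbabilityMeasure μ] [NullSingletonClass μ]
    (e : X ≃ᵐ X) (hT : MeasurePreserving (⇑e) μ μ)
    (hap : ∀ n : ℕ, 1 ≤ n → μ {x : X | (⇑e)^[n] x = x} = 0) :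
    ∃ f : X → ℕ, Measurable f ∧
      ∀ A : Set X, MeasurableSet A →
        ∃ B : Set X,
          MeasurableSet[⨆ n : ℤ,
            MeasurableSpace.comap (fun x => f (zIter e n x)) (⊤ : MeasurableSpace ℕ)] B ∧
          μ (symmDiff A B) = 0 :=
  rokhlin_countable_generator_general μ e hT hap
end
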